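/- Let A be a noetherian commutative ring, I = (f₁,…,f_m) an ideal, and A → A' a finite ring homomorphism that is an isomorphism after inverting each f_i (i.e., A[1/f_i] → A'[1/f_i] is an isomorphism for all i). Then for every finitely generated A-module M with a compatible finitely generated A'-module M' such that M[1/f_i] ≅ M'[1/f_i], the canonical map of pro-abelian groups {(f₁ⁿ,…,f_mⁿ)·M}ₙ → {(f₁ⁿ,…,f_mⁿ)·M'}ₙ is an isomorphism. -/
import Mathlib


/-!
Statement 17: Let `A` be a noetherian commutative ring, `I = (f₁, …, f_m)` an ideal, and
`A → A'` a finite ring homomorphism that is an isomorphism after inverting each `f i`.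
Then for every finitely generated `A`-module `M` with a compatible finitely generated
`A'`-module `M'` (i.e. an `A`-linear map `ψ : M → M'` inducing isomorphisms
`M[1/fᵢ] ≅ M'[1/fᵢ]`), the canonical map of pro-abelian groups
`{IⁿM}ₙ → {IⁿM'}ₙ` is an isomorphism.  Concretely (the transition maps being the
inclusions), the pro-isomorphism amounts to:
(pro-surjectivity) for every `n` there is `m ≥ n` with `Iᵐ M' ⊆ ψ(Iⁿ M)`, and
(pro-injectivity) for every `n` there is `m ≥ n` with `Iᵐ M ∩ ker ψ = 0`.
-/

universe u

/-- If every element of a finitely generated submodule `T` is sent into `P` by a power of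
each `f i`, then some power of the ideal `(f₁, …, f_m)` sends all of `T` into `P`. -/
lemma aux_exists_pow_smul_le
    {A : Type u} [CommRing A] {m : ℕ} (f : Fin m → A)
    {Mod : Type u} [AddCommGroup Mod] [Module A Mod]
    (T P : Submodule A Mod) (hT : T.FG)
    (h : ∀ i : Fin m, ∀ y ∈ T, ∃ n : ℕ, (f i) ^ n • y ∈ P) :
    ∃ e : ℕ, (Ideal.span (Set.range f)) ^ e • T ≤ P := by
  classical
  -- uniform exponent per index i
  have hN : ∀ i : Fin m, ∃ N : ℕ, ∀ y ∈ T, (f i) ^ N • y ∈ P := by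
    intro i
    obtain ⟨s, hs⟩ := hT
    set g : Mod → ℕ := fun y => if hy : y ∈ T then (h i y hy).choose else 0 with hg
    refine ⟨s.sup g, ?_⟩
    have hgen : ∀ y ∈ s, (f i) ^ (s.sup g) • y ∈ P := by
      intro y hy
      have hyT : y ∈ T := by rw [← hs]; exact Submodule.subset_span hy
      have h1 : (f i) ^ (g y) • y ∈ P := by
        simpa [hg, dif_pos hyT] using (h i y hyT).choose_spec
      have hle : g y ≤ s.sup g := Finset.le_sup hy
      have : (f i) ^ (s.sup g) • y = (f i) ^ (s.sup g - g y) • ((f i) ^ (g y) • y) := by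
        rw [smul_smul, ← pow_add, Nat.sub_add_cancel hle]
      rw [this]
      exact P.smul_mem _ h1
    intro y hyT
    have : y ∈ Submodule.comap ((LinearMap.lsmul A Mod) ((f i) ^ (s.sup g))) P := by
      have hle : T ≤ Submodule.comap ((LinearMap.lsmul A Mod) ((f i) ^ (s.sup g))) P := by
        rw [← hs, Submodule.span_le]
        intro y hy
        exact hgen y hy
      exact hle hyT
    simpa using this
  choose N hNspec using hN
  set J : Ideal A := Ideal.span (Set.range fun i => (f i) ^ (N i)) with hJ
  have hrad : Ideal.span (Set.range f) ≤ J.radical := by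
    rw [Ideal.span_le]
    rintro _ ⟨i, rfl⟩
    exact ⟨N i, Ideal.subset_span ⟨i, rfl⟩⟩
  obtain ⟨e, he⟩ := Ideal.exists_pow_le_of_le_radical_of_fg hrad
    (Submodule.fg_span (Set.finite_range f))
  refine ⟨e, le_trans (Submodule.smul_mono he le_rfl) ?_⟩
  rw [Submodule.smul_le]
  intro r hr y hy
  induction hr using Submodule.span_induction with
  | mem x hx =>
      obtain ⟨i, rfl⟩ := hx
      exact hNspec i y hy
  | zero => simpa using P.zero_mem
  | add x z hx hz ihx ihz => rw [add_smul]; exact P.add_mem ihx ihz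
  | smul a x hx ih => rw [smul_eq_mul, mul_smul]; exact P.smul_mem a ih

theorem pro_ideal_filtration_iso_of_finite_birational
    (A : Type u) [CommRing A] [IsNoetherianRing A]
    (m : ℕ) (f : Fin m → A)
    (A' : Type u) [CommRing A'] [Algebra A A'] [Module.Finite A A']
    -- `A → A'` is an isomorphism after inverting each `f i`:
    (hring : ∀ i : Fin m, Function.Bijective (Localization.awayMap (algebraMap A A') (f i)))
    (M : Type u) [AddCommGroup M] [Module A M] [Module.Finite A M]
    (M' : Type u) [AddCommGroup M'] [Module A' M'] [Module A M'] [IsScalarTower A A' M']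
    [Module.Finite A' M']
    (ψ : M →ₗ[A] M')
    -- `ψ` is an isomorphism after inverting each `f i`:
    (hmod : ∀ i : Fin m,
      Function.Bijective (LocalizedModule.map (Submonoid.powers (f i)) ψ)) :
    -- the induced map of pro-abelian groups `{IⁿM}ₙ → {IⁿM'}ₙ` is an isomorphism, where
    -- `I = (f₁, …, f_m)`:
    (∀ n : ℕ, ∃ k : ℕ, n ≤ k ∧
      ((Ideal.span (Set.range f)) ^ k • (⊤ : Submodule A M') ≤
        Submodule.map ψ ((Ideal.span (Set.range f)) ^ n • (⊤ : Submodule A M)))) ∧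
    (∀ n : ℕ, ∃ k : ℕ, n ≤ k ∧
      ((Ideal.span (Set.range f)) ^ k • (⊤ : Submodule A M) ⊓ LinearMap.ker ψ = ⊥)) := by
  classical
  set I : Ideal A := Ideal.span (Set.range f) with hI
  constructor
  · -- pro-surjectivity
    have hMfin : Module.Finite A M' := Module.Finite.trans A' M'
    -- every element of M' is hit by ψ after multiplying by a power of f i
    have key : ∀ i : Fin m, ∀ y ∈ (⊤ : Submodule A M'),
        ∃ n : ℕ, (f i) ^ n • y ∈ Submodule.map ψ (⊤ : Submodule A M) := by
      intro i y _
      obtain ⟨z, hz⟩ := (hmod i).2 (LocalizedModule.mk y 1)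
      obtain ⟨x, t, rfl⟩ : ∃ x t, LocalizedModule.mk x t = z := by
        induction z using LocalizedModule.induction_on with
        | _ x t => exact ⟨x, t, rfl⟩
      rw [LocalizedModule.map_mk, LocalizedModule.mk_eq] at hz
      obtain ⟨u, hu⟩ := hz
      obtain ⟨b, hb⟩ := u.2
      obtain ⟨a, ha⟩ := t.2
      refine ⟨b + a, (u : A) • x, Submodule.mem_top, ?_⟩
      have hu' : (u : A) • ψ x = ((u : A) * (t : A)) • y := by
        simpa [Submonoid.smul_def, one_smul, smul_smul] using hu
      rw [map_smul, hu', ← hb, ← ha, ← pow_add]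
    obtain ⟨e, he⟩ := aux_exists_pow_smul_le f ⊤ (Submodule.map ψ ⊤)
      (Module.Finite.fg_top (R := A) (M := M')) key
    intro n
    refine ⟨n + e, Nat.le_add_right n e, ?_⟩
    calc I ^ (n + e) • (⊤ : Submodule A M')
        = I ^ n • (I ^ e • (⊤ : Submodule A M')) := by rw [pow_add, mul_smul]
      _ ≤ I ^ n • Submodule.map ψ (⊤ : Submodule A M) := Submodule.smul_mono le_rfl he
      _ = Submodule.map ψ (I ^ n • (⊤ : Submodule A M)) := (Submodule.map_smul'' _ _ _).symm
  · -- pro-injectivity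
    have hker : ∀ i : Fin m, ∀ x ∈ LinearMap.ker ψ,
        ∃ n : ℕ, (f i) ^ n • x ∈ (⊥ : Submodule A M) := by
      intro i x hx
      have hx0 : ψ x = 0 := hx
      have h1 : LocalizedModule.map (Submonoid.powers (f i)) ψ (LocalizedModule.mk x 1)
          = LocalizedModule.map (Submonoid.powers (f i)) ψ 0 := by
        rw [map_zero, LocalizedModule.map_mk, hx0, LocalizedModule.zero_mk]
      have h2 : LocalizedModule.mk x (1 : Submonoid.powers (f i)) = 0 := (hmod i).1 h1
      rw [← LocalizedModule.zero_mk (1 : Submonoid.powers (f i)),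
        LocalizedModule.mk_eq] at h2
      obtain ⟨u, hu⟩ := h2
      obtain ⟨b, hb⟩ := u.2
      refine ⟨b, ?_⟩
      have : (u : A) • x = 0 := by
        simpa [Submonoid.smul_def, one_smul] using hu
      rw [Submodule.mem_bot, show f i ^ b = (u : A) from hb, this]
    have hKfg : (LinearMap.ker ψ).FG := by
      have : IsNoetherian A M := isNoetherian_of_isNoetherianRing_of_finite A M
      exact IsNoetherian.noetherian _
    obtain ⟨e, he⟩ := aux_exists_pow_smul_le f (LinearMap.ker ψ) ⊥ hKfg hker
    obtain ⟨c, hc⟩ := Ideal.exists_pow_inf_eq_pow_smul I (LinearMap.ker ψ)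
    intro n
    refine ⟨n + c + e, by omega, ?_⟩
    rw [hc (n + c + e) (by omega)]
    refine le_bot_iff.1 ?_
    calc I ^ (n + c + e - c) • (I ^ c • (⊤ : Submodule A M) ⊓ LinearMap.ker ψ)
        ≤ I ^ e • LinearMap.ker ψ :=
          Submodule.smul_mono (Ideal.pow_le_pow_right (by omega)) inf_le_right
      _ ≤ ⊥ := he
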